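/- arXiv:0704.3002 — 3 statements merged into one kernel-verified Lean document; each statement's English description precedes it below -/
import Mathlib

section
/- The canonical projection τ_n : Br_n → Σ_n sending σ_i to the transposition s_i = (i, i+1) admits a unique set-theoretic section r : Σ_n → Br_n such that r(s_i) = σ_i for all i and r(xy) = r(x)·r(y) whenever |xy| = |x| + |y|, where |·| denotes word length in the generators s_1,...,s_{n-1}. -/
/-- The set of braid relators in the free group on `m` generators `σ_1, …, σ_m`
(so the braid group on `m+1` strands). -/
def braidRelsSet (m : ℕ) : Set (FreeGroup (Fin m)) :=
  {w | (∃ i j : Fin m, (i : ℕ) + 1 < (j : ℕ) ∧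
          w = .of i * .of j * (.of i)⁻¹ * (.of j)⁻¹) ∨
       (∃ i j : Fin m, (i : ℕ) + 1 = (j : ℕ) ∧
          w = .of i * .of j * .of i * (.of j * .of i * .of j)⁻¹)}

/-- The braid group `Br_n` on `n` strands, with the Artin presentation on
generators `σ_1, …, σ_{n-1}`. -/
def BraidGroup (n : ℕ) : Type := PresentedGroup (braidRelsSet (n - 1))

instance (n : ℕ) : Group (BraidGroup n) := by unfold BraidGroup; infer_instance

/-- The Artin generator `σ_{i+1}` (`0`-based index `i`) of the braid group. -/
def braidGen (n : ℕ) (i : Fin (n - 1)) : BraidGroup n := PresentedGroup.of i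

/-- The adjacent transposition `s_{i+1} = ((i+1), (i+2))` (0-based: swaps `i`
and `i+1`) in the symmetric group `Σ_n`. -/
def adjTrans (n : ℕ) (i : Fin (n - 1)) : Equiv.Perm (Fin n) :=
  Equiv.swap ⟨(i : ℕ), by have := i.isLt; omega⟩ ⟨(i : ℕ) + 1, by have := i.isLt; omega⟩

/-- The word length of a permutation with respect to the adjacent
transpositions `s_1, …, s_{n-1}`. -/
noncomputable def permLength (n : ℕ) (x : Equiv.Perm (Fin n)) : ℕ :=
  sInf {k | ∃ l : List (Fin (n - 1)), l.length = k ∧ (l.map (adjTrans n)).prod = x}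

/-!
A word `s_{i₁} ⋯ s_{i_k}` for `w ∈ Σ_n` is reduced when `k = |w|`, and `|w|` is the number of
inversions of `w`: multiplying on the left by `s_i` creates or destroys exactly the inversion
formed by the positions of the values `i` and `i + 1`. Matsumoto's theorem says that all reduced
words of `w` have the same image `σ_{i₁} ⋯ σ_{i_k}` in `Br_n`. Inducting on `|w|`, it suffices
to compare two reduced words starting with different letters `i ≠ j`; both are then left
descents of `w`, so `w` also has reduced words starting with `i j` and `j i` (if `|i - j| > 1`),
resp. `i j i` and `j i j` (if `|i - j| = 1`), with a common tail, and these two prefixes are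
equal in `Br_n`.

The common image `r(w)` is the section: reduced words of `x` and `y` concatenate to a reduced word
of `xy` when `|xy| = |x| + |y|`. Conversely, for a reduced word `i :: l` of `w` the factorisation
`w = s_i (s_i w)` is length-additive, so any such `r` satisfies `r(w) = σ_i r(s_i w)`.
-/

open Equiv Finset

theorem Fin.strictMono_of_consecutive_lt {n : ℕ} {α : Type*} [Preorder α] {f : Fin n → α}
    (h : ∀ a b : Fin n, (b : ℕ) = a + 1 → f a < f b) : StrictMono f := by
  refine strictMono_of_lt_succ fun a ha => h _ _ ?_
  obtain ⟨c, hc⟩ := not_isMax_iff.1 ha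
  have hlt : (a : ℕ) + 1 < n := by have := c.isLt; rw [Fin.lt_def] at hc; omega
  have hcov : a ⋖ ⟨a + 1, hlt⟩ :=
    ⟨Fin.lt_def.2 (Nat.lt_succ_self _), fun d had hdb => by
      rw [Fin.lt_def] at had hdb; simp only at hdb; omega⟩
  rw [Order.succ_eq_of_covBy hcov]

section AdjacentTranspositions

variable {n : ℕ}

def adjLo (i : Fin (n - 1)) : Fin n := ⟨i, by omega⟩

def adjHi (i : Fin (n - 1)) : Fin n := ⟨i + 1, by omega⟩

@[simp] theorem adjLo_val (i : Fin (n - 1)) : (adjLo i : ℕ) = i := rfl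

@[simp] theorem adjHi_val (i : Fin (n - 1)) : (adjHi i : ℕ) = i + 1 := rfl

theorem adjLo_lt_adjHi (i : Fin (n - 1)) : adjLo i < adjHi i :=
  Fin.lt_def.2 (Nat.lt_succ_self _)

theorem adjHi_eq_adjLo {i j : Fin (n - 1)} (h : (i : ℕ) + 1 = j) : adjHi i = adjLo j :=
  Fin.ext h

theorem adjTrans_eq_swap (i : Fin (n - 1)) : adjTrans n i = swap (adjLo i) (adjHi i) := rfl

@[simp] theorem adjTrans_mul_self (i : Fin (n - 1)) : adjTrans n i * adjTrans n i = 1 :=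
  swap_mul_self _ _

@[simp] theorem adjTrans_inv (i : Fin (n - 1)) : (adjTrans n i)⁻¹ = adjTrans n i :=
  swap_inv _ _

@[simp] theorem adjTrans_mul_adjTrans_mul (i : Fin (n - 1)) (w : Perm (Fin n)) :
    adjTrans n i * (adjTrans n i * w) = w := by
  rw [← mul_assoc, adjTrans_mul_self, one_mul]

theorem inv_adjTrans_mul_apply (i : Fin (n - 1)) (w : Perm (Fin n)) (x : Fin n) :
    (adjTrans n i * w)⁻¹ x = w⁻¹ (adjTrans n i x) := by
  rw [mul_inv_rev, adjTrans_inv, Perm.mul_apply]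

@[simp] theorem adjTrans_apply_adjLo (i : Fin (n - 1)) : adjTrans n i (adjLo i) = adjHi i :=
  swap_apply_left _ _

@[simp] theorem adjTrans_apply_adjHi (i : Fin (n - 1)) : adjTrans n i (adjHi i) = adjLo i :=
  swap_apply_right _ _

theorem adjTrans_apply_of_ne {i : Fin (n - 1)} {x : Fin n} (h₁ : (x : ℕ) ≠ i)
    (h₂ : (x : ℕ) ≠ i + 1) : adjTrans n i x = x :=
  swap_apply_of_ne_of_ne (Fin.ne_of_val_ne h₁) (Fin.ne_of_val_ne h₂)

theorem adjTrans_apply_adjLo_of_succ_eq {i j : Fin (n - 1)} (h : (i : ℕ) + 1 = j) :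
    adjTrans n i (adjLo j) = adjLo i := by
  rw [← adjHi_eq_adjLo h, adjTrans_apply_adjHi]

theorem adjTrans_apply_adjHi_of_succ_eq {i j : Fin (n - 1)} (h : (i : ℕ) + 1 = j) :
    adjTrans n j (adjHi i) = adjHi j := by
  rw [adjHi_eq_adjLo h, adjTrans_apply_adjLo]

theorem adjTrans_lt_adjTrans_iff (i : Fin (n - 1)) {x y : Fin n}
    (h : ¬(x = adjLo i ∧ y = adjHi i)) (h' : ¬(x = adjHi i ∧ y = adjLo i)) :
    adjTrans n i x < adjTrans n i y ↔ x < y := by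
  simp only [adjTrans_eq_swap, swap_apply_def, Fin.lt_def, Fin.ext_iff]
  split_ifs <;> simp_all [Fin.ext_iff] <;> omega

theorem adjTrans_comm {i j : Fin (n - 1)} (h : (i : ℕ) + 1 < j ∨ (j : ℕ) + 1 < i) :
    adjTrans n i * adjTrans n j = adjTrans n j * adjTrans n i := by
  refine (Perm.disjoint_swap_swap ?_).commute
  simp [Fin.ext_iff]
  omega

theorem adjTrans_braid {i j : Fin (n - 1)} (h : (i : ℕ) + 1 = j ∨ (j : ℕ) + 1 = i) :
    adjTrans n i * adjTrans n j * adjTrans n i = adjTrans n j * adjTrans n i * adjTrans n j := by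
  wlog hij : (i : ℕ) + 1 = j generalizing i j
  · exact (this h.symm (h.resolve_left hij)).symm
  have h₁ : adjLo i ≠ adjLo j := Fin.ne_of_val_ne (by simp; omega)
  have h₂ : adjHi j ≠ adjLo j := Fin.ne_of_val_ne (by simp)
  have h₃ : adjLo i ≠ adjHi j := Fin.ne_of_val_ne (by simp; omega)
  simp only [adjTrans_eq_swap, adjHi_eq_adjLo hij]
  rw [swap_mul_swap_mul_swap h₁ h₃, swap_comm (adjLo i) (adjLo j),
    swap_comm (adjLo j) (adjHi j), swap_mul_swap_mul_swap h₂ h₃.symm, swap_comm]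

end AdjacentTranspositions

section Descents

variable {n : ℕ} {i j : Fin (n - 1)} {w : Perm (Fin n)}

def IsLeftDescent (i : Fin (n - 1)) (w : Perm (Fin n)) : Prop :=
  w⁻¹ (adjHi i) < w⁻¹ (adjLo i)

theorem not_isLeftDescent_iff : ¬IsLeftDescent i w ↔ w⁻¹ (adjLo i) < w⁻¹ (adjHi i) :=
  not_lt.trans (w⁻¹.injective.ne (adjLo_lt_adjHi i).ne).le_iff_lt

theorem isLeftDescent_adjTrans_mul_iff :
    IsLeftDescent i (adjTrans n i * w) ↔ ¬IsLeftDescent i w := by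
  rw [not_isLeftDescent_iff, IsLeftDescent, inv_adjTrans_mul_apply, inv_adjTrans_mul_apply,
    adjTrans_apply_adjLo, adjTrans_apply_adjHi]

theorem exists_isLeftDescent (hw : w ≠ 1) : ∃ i, IsLeftDescent i w := by
  by_contra! hasc
  refine hw (inv_eq_one.1 (Perm.ext fun x => ?_))
  refine congrFun (StrictMono.eq_id (Fin.strictMono_of_consecutive_lt fun a b hab => ?_)) x
  have hlo : adjLo ⟨a, by omega⟩ = a := rfl
  have hhi : adjHi ⟨a, by omega⟩ = b := Fin.ext hab.symm
  simpa only [hlo, hhi] using not_isLeftDescent_iff.1 (hasc ⟨a, by omega⟩)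

theorem IsLeftDescent.adjTrans_mul_of_far (h : (i : ℕ) + 1 < j ∨ (j : ℕ) + 1 < i)
    (hi : IsLeftDescent i w) : IsLeftDescent i (adjTrans n j * w) := by
  rwa [IsLeftDescent, inv_adjTrans_mul_apply, inv_adjTrans_mul_apply,
    adjTrans_apply_of_ne (x := adjLo i) (by simp; omega) (by simp; omega),
    adjTrans_apply_of_ne (x := adjHi i) (by simp; omega) (by simp; omega)]

theorem IsLeftDescent.adjTrans_mul_of_adjacent (h : (i : ℕ) + 1 = j ∨ (j : ℕ) + 1 = i)
    (hi : IsLeftDescent i w) (hj : IsLeftDescent j w) :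
    IsLeftDescent j (adjTrans n i * w) ∧ IsLeftDescent i (adjTrans n j * (adjTrans n i * w)) := by
  simp only [IsLeftDescent, inv_adjTrans_mul_apply] at *
  rcases h with h | h
  · simp (disch := simp; omega) only [adjTrans_apply_adjLo, adjTrans_apply_adjLo_of_succ_eq h,
      adjTrans_apply_adjHi_of_succ_eq h, adjTrans_apply_of_ne]
    rw [adjHi_eq_adjLo h] at *
    exact ⟨hj.trans hi, hj⟩
  · simp (disch := simp; omega) only [adjTrans_apply_adjHi, adjTrans_apply_adjLo_of_succ_eq h,
      adjTrans_apply_adjHi_of_succ_eq h, adjTrans_apply_of_ne]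
    rw [adjHi_eq_adjLo h] at *
    exact ⟨hi.trans hj, hj⟩

end Descents

section Inversions

variable {n : ℕ} {i : Fin (n - 1)} {w : Perm (Fin n)}

def inversions (w : Perm (Fin n)) : Finset (Fin n × Fin n) :=
  univ.filter fun p => p.1 < p.2 ∧ w p.2 < w p.1

theorem mem_inversions {p : Fin n × Fin n} :
    p ∈ inversions w ↔ p.1 < p.2 ∧ w p.2 < w p.1 := by
  simp [inversions]

@[simp] theorem inversions_one : inversions (1 : Perm (Fin n)) = ∅ := by
  ext p
  simp only [mem_inversions, Perm.one_apply, notMem_empty, iff_false, not_and, not_lt]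
  exact le_of_lt

theorem card_inversions_adjTrans_mul_of_not_isLeftDescent (h : ¬IsLeftDescent i w) :
    #(inversions (adjTrans n i * w)) = #(inversions w) + 1 := by
  set a := w⁻¹ (adjLo i)
  set b := w⁻¹ (adjHi i)
  have hab : a < b := not_isLeftDescent_iff.1 h
  have hnot : (a, b) ∉ inversions w := by simp [mem_inversions, a, b, (adjLo_lt_adjHi i).le]
  suffices inversions (adjTrans n i * w) = insert (a, b) (inversions w) by
    rw [this, card_insert_of_notMem hnot]
  ext ⟨x, y⟩
  have hx : ∀ {z}, w x = z ↔ x = w⁻¹ z := Perm.eq_inv_iff_eq.symm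
  have hy : ∀ {z}, w y = z ↔ y = w⁻¹ z := Perm.eq_inv_iff_eq.symm
  simp only [mem_insert, mem_inversions, Perm.mul_apply, Prod.mk.injEq]
  by_cases hxy : x = a ∧ y = b
  · obtain ⟨rfl, rfl⟩ := hxy
    simpa [a, b, adjLo_lt_adjHi] using hab
  · rw [or_iff_right hxy]
    refine and_congr_right fun hlt => adjTrans_lt_adjTrans_iff i ?_ ?_
    · rintro ⟨hya, hxb⟩
      exact lt_asymm hab (by rwa [hx.1 hxb, hy.1 hya] at hlt)
    · rintro ⟨hyb, hxa⟩
      exact hxy ⟨hx.1 hxa, hy.1 hyb⟩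

theorem IsLeftDescent.card_inversions (h : IsLeftDescent i w) :
    #(inversions w) = #(inversions (adjTrans n i * w)) + 1 := by
  simpa using card_inversions_adjTrans_mul_of_not_isLeftDescent
    (isLeftDescent_adjTrans_mul_iff.not.2 (not_not.2 h))

end Inversions

section Length

variable {n : ℕ}

def wordProd (l : List (Fin (n - 1))) : Perm (Fin n) := (l.map (adjTrans n)).prod

@[simp] theorem wordProd_nil : wordProd ([] : List (Fin (n - 1))) = 1 := rfl

@[simp] theorem wordProd_cons (i : Fin (n - 1)) (l : List (Fin (n - 1))) :
    wordProd (i :: l) = adjTrans n i * wordProd l := List.prod_cons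

@[simp] theorem wordProd_append (l l' : List (Fin (n - 1))) :
    wordProd (l ++ l') = wordProd l * wordProd l' := by
  simp [wordProd]

theorem card_inversions_wordProd_le (l : List (Fin (n - 1))) :
    #(inversions (wordProd l)) ≤ l.length := by
  induction l with
  | nil => simp
  | cons i l ih =>
    rw [wordProd_cons, List.length_cons]
    by_cases h : IsLeftDescent i (wordProd l)
    · have := h.card_inversions
      omega
    · rw [card_inversions_adjTrans_mul_of_not_isLeftDescent h]
      omega

theorem exists_wordProd_eq_length_eq_card_inversions (w : Perm (Fin n)) :
    ∃ l, wordProd l = w ∧ l.length = #(inversions w) := by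
  by_cases hw : w = 1
  · exact ⟨[], by simp [hw]⟩
  obtain ⟨i, hi⟩ := exists_isLeftDescent hw
  have hcard := hi.card_inversions
  obtain ⟨l, hl, hlen⟩ := exists_wordProd_eq_length_eq_card_inversions (adjTrans n i * w)
  exact ⟨i :: l, by simp [hl], by simp [hlen, hcard]⟩
termination_by #(inversions w)

theorem permLength_wordProd_le (l : List (Fin (n - 1))) : permLength n (wordProd l) ≤ l.length :=
  Nat.sInf_le ⟨l, rfl, rfl⟩

theorem permLength_eq_card_inversions (w : Perm (Fin n)) : permLength n w = #(inversions w) := by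
  obtain ⟨l, hl, hlen⟩ := exists_wordProd_eq_length_eq_card_inversions w
  refine le_antisymm ?_ (le_csInf ⟨_, l, rfl, hl⟩ ?_)
  · rw [← hlen, ← hl]
    exact permLength_wordProd_le l
  · rintro k ⟨l', rfl, rfl⟩
    exact card_inversions_wordProd_le l'

theorem permLength_adjTrans_mul_of_not_isLeftDescent {i : Fin (n - 1)} {w : Perm (Fin n)}
    (h : ¬IsLeftDescent i w) : permLength n (adjTrans n i * w) = permLength n w + 1 := by
  simp only [permLength_eq_card_inversions, card_inversions_adjTrans_mul_of_not_isLeftDescent h]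

theorem IsLeftDescent.permLength_eq {i : Fin (n - 1)} {w : Perm (Fin n)}
    (h : IsLeftDescent i w) : permLength n w = permLength n (adjTrans n i * w) + 1 := by
  simp only [permLength_eq_card_inversions, h.card_inversions]

@[simp] theorem permLength_one : permLength n 1 = 0 := by
  simp [permLength_eq_card_inversions]

@[simp] theorem permLength_adjTrans (i : Fin (n - 1)) : permLength n (adjTrans n i) = 1 := by
  have h : ¬IsLeftDescent i (1 : Perm (Fin n)) := not_isLeftDescent_iff.2 (adjLo_lt_adjHi i)
  simpa using permLength_adjTrans_mul_of_not_isLeftDescent h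

end Length

section ReducedWords

variable {n : ℕ}

def IsReducedWord (l : List (Fin (n - 1))) (w : Perm (Fin n)) : Prop :=
  wordProd l = w ∧ l.length = permLength n w

theorem exists_isReducedWord (w : Perm (Fin n)) : ∃ l, IsReducedWord l w := by
  obtain ⟨l, hl, hlen⟩ := exists_wordProd_eq_length_eq_card_inversions w
  exact ⟨l, hl, hlen.trans (permLength_eq_card_inversions w).symm⟩

theorem isReducedWord_cons_iff {i : Fin (n - 1)} {l : List (Fin (n - 1))} {w : Perm (Fin n)} :
    IsReducedWord (i :: l) w ↔ IsLeftDescent i w ∧ IsReducedWord l (adjTrans n i * w) := by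
  constructor
  · rintro ⟨hprod, hlen⟩
    rw [List.length_cons] at hlen
    have hprod' : wordProd l = adjTrans n i * w := by
      rw [← hprod, wordProd_cons, adjTrans_mul_adjTrans_mul]
    have hle := hprod' ▸ permLength_wordProd_le l
    have hdesc : IsLeftDescent i w :=
      by_contra fun h => by have := permLength_adjTrans_mul_of_not_isLeftDescent h; omega
    exact ⟨hdesc, hprod', by have := hdesc.permLength_eq; omega⟩
  · rintro ⟨hdesc, hprod, hlen⟩
    refine ⟨by rw [wordProd_cons, hprod, adjTrans_mul_adjTrans_mul], ?_⟩
    rw [List.length_cons, hlen, ← hdesc.permLength_eq]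

end ReducedWords

section Braids

variable {n : ℕ}

theorem braidGen_comm {i j : Fin (n - 1)} (h : (i : ℕ) + 1 < j ∨ (j : ℕ) + 1 < i) :
    braidGen n i * braidGen n j = braidGen n j * braidGen n i := by
  wlog hij : (i : ℕ) + 1 < j generalizing i j
  · exact (this h.symm (h.resolve_left hij)).symm
  refine PresentedGroup.mk_eq_mk_of_mul_inv_mem (Or.inl ⟨i, j, hij, ?_⟩)
  group

theorem braidGen_braid {i j : Fin (n - 1)} (h : (i : ℕ) + 1 = j ∨ (j : ℕ) + 1 = i) :
    braidGen n i * braidGen n j * braidGen n i = braidGen n j * braidGen n i * braidGen n j := by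
  wlog hij : (i : ℕ) + 1 = j generalizing i j
  · exact (this h.symm (h.resolve_left hij)).symm
  exact PresentedGroup.mk_eq_mk_of_mul_inv_mem (Or.inr ⟨i, j, hij, rfl⟩)

def braidWord (l : List (Fin (n - 1))) : BraidGroup n := (l.map (braidGen n)).prod

@[simp] theorem braidWord_nil : braidWord ([] : List (Fin (n - 1))) = 1 := rfl

@[simp] theorem braidWord_cons (i : Fin (n - 1)) (l : List (Fin (n - 1))) :
    braidWord (i :: l) = braidGen n i * braidWord l := List.prod_cons

@[simp] theorem braidWord_append (l l' : List (Fin (n - 1))) :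
    braidWord (l ++ l') = braidWord l * braidWord l' := by
  simp [braidWord]

theorem lift_adjTrans_eq_one_of_mem_braidRelsSet :
    ∀ r ∈ braidRelsSet (n - 1), FreeGroup.lift (adjTrans n) r = 1 := by
  rintro r (⟨i, j, h, rfl⟩ | ⟨i, j, h, rfl⟩)
  · simp only [map_mul, map_inv, FreeGroup.lift_apply_of, adjTrans_comm (Or.inl h)]
    group
  · simp only [map_mul, map_inv, FreeGroup.lift_apply_of, adjTrans_braid (Or.inl h),
      mul_inv_cancel]

def braidProjection (n : ℕ) : BraidGroup n →* Perm (Fin n) :=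
  PresentedGroup.toGroup lift_adjTrans_eq_one_of_mem_braidRelsSet

@[simp] theorem braidProjection_braidGen (i : Fin (n - 1)) :
    braidProjection n (braidGen n i) = adjTrans n i :=
  PresentedGroup.toGroup.of lift_adjTrans_eq_one_of_mem_braidRelsSet

@[simp] theorem braidProjection_braidWord (l : List (Fin (n - 1))) :
    braidProjection n (braidWord l) = wordProd l := by
  induction l with
  | nil => simp
  | cons i l ih => simp [ih]

end Braids

section Matsumoto

variable {n : ℕ}

theorem exists_braid_related_reducedWords {i j : Fin (n - 1)} {w : Perm (Fin n)} (hij : i ≠ j)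
    (hi : IsLeftDescent i w) (hj : IsLeftDescent j w) :
    ∃ p q z : List (Fin (n - 1)), braidWord (i :: p) = braidWord (j :: q) ∧
      IsReducedWord (i :: p ++ z) w ∧ IsReducedWord (j :: q ++ z) w := by
  have hne : (i : ℕ) ≠ j := Fin.val_ne_of_ne hij
  by_cases hfar : (i : ℕ) + 1 < j ∨ (j : ℕ) + 1 < i
  · obtain ⟨z, hz⟩ := exists_isReducedWord (adjTrans n j * (adjTrans n i * w))
    have hz' : IsReducedWord z (adjTrans n i * (adjTrans n j * w)) := by
      rwa [← mul_assoc, adjTrans_comm hfar, mul_assoc]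
    refine ⟨[j], [i], z, by simpa using braidGen_comm hfar, ?_, ?_⟩
    · simp only [List.cons_append, List.nil_append, isReducedWord_cons_iff]
      exact ⟨hi, hj.adjTrans_mul_of_far hfar.symm, hz⟩
    · simp only [List.cons_append, List.nil_append, isReducedWord_cons_iff]
      exact ⟨hj, hi.adjTrans_mul_of_far hfar, hz'⟩
  · have hadj : (i : ℕ) + 1 = j ∨ (j : ℕ) + 1 = i := by omega
    obtain ⟨z, hz⟩ := exists_isReducedWord (adjTrans n i * (adjTrans n j * (adjTrans n i * w)))
    have hz' : IsReducedWord z (adjTrans n j * (adjTrans n i * (adjTrans n j * w))) := by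
      rwa [← mul_assoc, ← mul_assoc, ← adjTrans_braid hadj, mul_assoc, mul_assoc]
    obtain ⟨hji, hiji⟩ := hi.adjTrans_mul_of_adjacent hadj hj
    obtain ⟨hij', hjij⟩ := hj.adjTrans_mul_of_adjacent hadj.symm hi
    refine ⟨[j, i], [i, j], z, by simpa [mul_assoc] using braidGen_braid hadj, ?_, ?_⟩
    · simp only [List.cons_append, List.nil_append, isReducedWord_cons_iff]
      exact ⟨hi, hji, hiji, hz⟩
    · simp only [List.cons_append, List.nil_append, isReducedWord_cons_iff]
      exact ⟨hj, hij', hjij, hz'⟩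

/-- Matsumoto's theorem for the symmetric group. -/
theorem braidWord_eq_of_isReducedWord {u v : List (Fin (n - 1))} {w : Perm (Fin n)}
    (hu : IsReducedWord u w) (hv : IsReducedWord v w) : braidWord u = braidWord v := by
  match u, v, hu, hv with
  | [], [], _, _ => rfl
  | [], _ :: _, hu, hv | _ :: _, [], hu, hv =>
    have := hu.2.trans hv.2.symm
    simp at this
  | i :: u, j :: v, hu, hv =>
    rw [isReducedWord_cons_iff] at hu hv
    have hlen_i := hu.1.permLength_eq
    have hlen_j := hv.1.permLength_eq
    by_cases hij : i = j
    · subst hij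
      rw [braidWord_cons, braidWord_cons, braidWord_eq_of_isReducedWord hu.2 hv.2]
    obtain ⟨p, q, z, hpq, hp, hq⟩ := exists_braid_related_reducedWords hij hu.1 hv.1
    rw [List.cons_append, isReducedWord_cons_iff] at hp hq
    calc braidWord (i :: u) = braidWord (i :: p) * braidWord z := by
          rw [braidWord_cons, braidWord_eq_of_isReducedWord hu.2 hp.2, braidWord_append,
            braidWord_cons, mul_assoc]
      _ = braidWord (j :: q) * braidWord z := by rw [hpq]
      _ = braidWord (j :: v) := by
          rw [braidWord_cons j v, braidWord_eq_of_isReducedWord hv.2 hq.2, braidWord_append,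
            braidWord_cons, mul_assoc]
termination_by permLength n w

end Matsumoto

section BraidSection

variable {n : ℕ}

noncomputable def braidSection (n : ℕ) (w : Perm (Fin n)) : BraidGroup n :=
  braidWord (exists_isReducedWord w).choose

theorem braidSection_eq_braidWord {l : List (Fin (n - 1))} {w : Perm (Fin n)}
    (hl : IsReducedWord l w) : braidSection n w = braidWord l :=
  braidWord_eq_of_isReducedWord (exists_isReducedWord w).choose_spec hl

theorem braidProjection_braidSection (w : Perm (Fin n)) :
    braidProjection n (braidSection n w) = w := by
  obtain ⟨l, hl⟩ := exists_isReducedWord w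
  rw [braidSection_eq_braidWord hl, braidProjection_braidWord, hl.1]

theorem braidSection_adjTrans (i : Fin (n - 1)) :
    braidSection n (adjTrans n i) = braidGen n i := by
  rw [braidSection_eq_braidWord (l := [i]) ⟨by simp, by simp⟩]
  simp

theorem braidSection_mul {x y : Perm (Fin n)}
    (h : permLength n (x * y) = permLength n x + permLength n y) :
    braidSection n (x * y) = braidSection n x * braidSection n y := by
  obtain ⟨u, hu⟩ := exists_isReducedWord x
  obtain ⟨v, hv⟩ := exists_isReducedWord y
  have huv : IsReducedWord (u ++ v) (x * y) := ⟨by simp [hu.1, hv.1], by simp [hu.2, hv.2, h]⟩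
  rw [braidSection_eq_braidWord huv, braidWord_append, braidSection_eq_braidWord hu,
    braidSection_eq_braidWord hv]

theorem eq_braidWord_of_isReducedWord {r : Perm (Fin n) → BraidGroup n}
    (hgen : ∀ i, r (adjTrans n i) = braidGen n i)
    (hmul : ∀ x y, permLength n (x * y) = permLength n x + permLength n y →
      r (x * y) = r x * r y)
    {l : List (Fin (n - 1))} {w : Perm (Fin n)} (hl : IsReducedWord l w) : r w = braidWord l := by
  induction l generalizing w with
  | nil =>
    obtain rfl : w = 1 := hl.1.symm
    simpa using hmul 1 1 (by simp)
  | cons i l ih =>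
    rw [isReducedWord_cons_iff] at hl
    have hlen := hl.1.permLength_eq
    calc r w = r (adjTrans n i * (adjTrans n i * w)) := by rw [adjTrans_mul_adjTrans_mul]
      _ = braidGen n i * braidWord l := by
        rw [hmul _ _ (by rw [adjTrans_mul_adjTrans_mul, permLength_adjTrans]; omega), hgen,
          ih hl.2]
      _ = braidWord (i :: l) := (braidWord_cons i l).symm

theorem eq_braidSection {r : Perm (Fin n) → BraidGroup n}
    (hgen : ∀ i, r (adjTrans n i) = braidGen n i)
    (hmul : ∀ x y, permLength n (x * y) = permLength n x + permLength n y →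
      r (x * y) = r x * r y) :
    r = braidSection n := by
  funext w
  obtain ⟨l, hl⟩ := exists_isReducedWord w
  rw [eq_braidWord_of_isReducedWord hgen hmul hl, braidSection_eq_braidWord hl]

end BraidSection

/-- The canonical projection `τ_n : Br_n → Σ_n`, `σ_i ↦ s_i`,
admits a unique set-theoretic section `r : Σ_n → Br_n` such that `r(s_i) = σ_i`
for all `i` and `r(xy) = r(x)·r(y)` whenever `|xy| = |x| + |y|`. -/
theorem braidProjection_unique_section (n : ℕ) :
    ∃ τ : BraidGroup n →* Equiv.Perm (Fin n),
      (∀ i : Fin (n - 1), τ (braidGen n i) = adjTrans n i) ∧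
      ∃! r : Equiv.Perm (Fin n) → BraidGroup n,
        (∀ x, τ (r x) = x) ∧
        (∀ i : Fin (n - 1), r (adjTrans n i) = braidGen n i) ∧
        ∀ x y : Equiv.Perm (Fin n),
          permLength n (x * y) = permLength n x + permLength n y →
            r (x * y) = r x * r y := by
  refine ⟨braidProjection n, braidProjection_braidGen, braidSection n,
    ⟨braidProjection_braidSection, braidSection_adjTrans, fun _ _ => braidSection_mul⟩, ?_⟩
  rintro r ⟨-, hgen, hmul⟩
  exact eq_braidSection hgen hmul
end

section
/- In the inverse braid monoid IB_n, the generator ε_i commutes with the Garside fundamental element Δ via the relation ε_i Δ = Δ ε_{n+1-i} for all i = 1,...,n. -/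
/-- Generators of the inverse braid monoid on `n` strands: `s i` is the Artin
generator `σ_{i+1}` (0-based `i`), `si i` is its formal inverse, and `e a` is the
idempotent `ε_{a+1}` (the trivial partial braid with the `(a+1)`-st string removed). -/
inductive IBGen (n : ℕ) : Type
  | s (i : Fin (n - 1))
  | si (i : Fin (n - 1))
  | e (a : Fin n)

/-- The defining relations of the inverse braid monoid `IB_n`
(braid relations, invertibility of the `σ_i`, and the Easdown–Lavers/Gilbert
relations between the `ε` and the `σ`). Indices: the generator `s i` crosses the
(0-based) strands `i` and `i+1`; `e a` deletes the (0-based) strand `a`. -/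
inductive ibRel (n : ℕ) : FreeMonoid (IBGen n) → FreeMonoid (IBGen n) → Prop
  | braid_comm (i j : Fin (n - 1)) (h : (i : ℕ) + 1 < (j : ℕ)) :
      ibRel n (.of (.s i) * .of (.s j)) (.of (.s j) * .of (.s i))
  | braid (i j : Fin (n - 1)) (h : (i : ℕ) + 1 = (j : ℕ)) :
      ibRel n (.of (.s i) * .of (.s j) * .of (.s i)) (.of (.s j) * .of (.s i) * .of (.s j))
  | inv_right (i : Fin (n - 1)) : ibRel n (.of (.s i) * .of (.si i)) 1
  | inv_left (i : Fin (n - 1)) : ibRel n (.of (.si i) * .of (.s i)) 1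
  | e_comm (a : Fin n) (i : Fin (n - 1)) (h : (i : ℕ) + 2 ≤ (a : ℕ) ∨ (a : ℕ) + 2 ≤ (i : ℕ)) :
      ibRel n (.of (.e a) * .of (.s i)) (.of (.s i) * .of (.e a))
  | e_s (i : Fin (n - 1)) (a b : Fin n) (ha : (a : ℕ) = (i : ℕ)) (hb : (b : ℕ) = (i : ℕ) + 1) :
      ibRel n (.of (.e a) * .of (.s i)) (.of (.s i) * .of (.e b))
  | e_s' (i : Fin (n - 1)) (a b : Fin n) (ha : (a : ℕ) = (i : ℕ)) (hb : (b : ℕ) = (i : ℕ) + 1) :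
      ibRel n (.of (.e b) * .of (.s i)) (.of (.s i) * .of (.e a))
  | idem (a : Fin n) : ibRel n (.of (.e a) * .of (.e a)) (.of (.e a))
  | e_ss (i : Fin (n - 1)) (b : Fin n) (hb : (b : ℕ) = (i : ℕ) + 1) :
      ibRel n (.of (.e b) * .of (.s i) * .of (.s i)) (.of (.e b))
  | ss_e (i : Fin (n - 1)) (b : Fin n) (hb : (b : ℕ) = (i : ℕ) + 1) :
      ibRel n (.of (.s i) * .of (.s i) * .of (.e b)) (.of (.e b))
  | ee_s (i : Fin (n - 1)) (a b : Fin n) (ha : (a : ℕ) = (i : ℕ)) (hb : (b : ℕ) = (i : ℕ) + 1) :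
      ibRel n (.of (.e a) * .of (.e b) * .of (.s i)) (.of (.e a) * .of (.e b))
  | s_ee (i : Fin (n - 1)) (a b : Fin n) (ha : (a : ℕ) = (i : ℕ)) (hb : (b : ℕ) = (i : ℕ) + 1) :
      ibRel n (.of (.s i) * .of (.e a) * .of (.e b)) (.of (.e a) * .of (.e b))

/-- The congruence on the free monoid generated by the defining relations of `IB_n`. -/
def ibCon (n : ℕ) : Con (FreeMonoid (IBGen n)) := conGen (ibRel n)

/-- The inverse braid monoid `IB_n` of partial braids on `n` strands,
given by the Easdown–Lavers/Gilbert presentation. -/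
def IB (n : ℕ) : Type := (ibCon n).Quotient

instance (n : ℕ) : Monoid (IB n) := by unfold IB; infer_instance

/-- The generator `σ_{i+1}` (0-based `i`) of `IB_n`. -/
def ibS (n : ℕ) (i : Fin (n - 1)) : IB n := (ibCon n).mk' (.of (.s i))

/-- The inverse generator `σ_{i+1}^{-1}` (0-based `i`) of `IB_n`. -/
def ibSi (n : ℕ) (i : Fin (n - 1)) : IB n := (ibCon n).mk' (.of (.si i))

/-- The idempotent generator `ε_{a+1}` (0-based `a`) of `IB_n`. -/
def ibE (n : ℕ) (a : Fin n) : IB n := (ibCon n).mk' (.of (.e a))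

/-- The generator `σ_{t+1}` of `IB_n` with unguarded natural-number (0-based)
index `t`; equal to `1` when out of range. -/
def ibSN (n : ℕ) (t : ℕ) : IB n := if h : t < n - 1 then ibS n ⟨t, h⟩ else 1

/-- The inverse generator `σ_{t+1}⁻¹` of `IB_n` with unguarded 0-based index. -/
def ibSiN (n : ℕ) (t : ℕ) : IB n := if h : t < n - 1 then ibSi n ⟨t, h⟩ else 1

/-- Garside's fundamental element
`Δ = (σ_1⋯σ_{n-1})(σ_1⋯σ_{n-2})⋯(σ_1σ_2)σ_1` in `IB_n`. -/
def ibDelta (n : ℕ) : IB n :=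
  ((List.range (n - 1)).reverse.map
    (fun t => ((List.range (t + 1)).map (ibSN n)).prod)).prod

/-- The inverse `Δ⁻¹` of Garside's fundamental element, written as a word in
the inverse generators. -/
def ibDeltaInv (n : ℕ) : IB n :=
  ((List.range (n - 1)).map
    (fun t => ((List.range (t + 1)).reverse.map (ibSiN n)).prod)).prod


/-! Each defining relation `ε σ = σ ε'` says that an idempotent passes through `σ_t` with its
strand index moved by the transposition `(t t+1)`. The one case missing from the presentation,
`ε_a σ_{a+1} = σ_{a+1} ε_a`, follows from the braid relation `σ_{a+1} (σ_a σ_{a+1}) =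
(σ_a σ_{a+1}) σ_a` by moving `ε_a` through the unit `σ_a σ_{a+1}`, which turns it into `ε_{a+2}`,
and cancelling. Hence `ε_a` passes through every positive word, its index moved by the
permutation the word induces on strands; for `Δ` this permutation is the half twist
`a ↦ n - 1 - a`. -/

/-- Position of strand `a` after the crossings `σ_t, t ∈ w` (0-based), read left to right. -/
def trackStrand (w : List ℕ) (a : ℕ) : ℕ :=
  w.foldl (fun x t => Equiv.swap t (t + 1) x) a

@[simp] lemma trackStrand_nil (a : ℕ) : trackStrand [] a = a := rfl

lemma trackStrand_cons (t : ℕ) (w : List ℕ) (a : ℕ) :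
    trackStrand (t :: w) a = trackStrand w (Equiv.swap t (t + 1) a) := rfl

lemma trackStrand_append (w₁ w₂ : List ℕ) (a : ℕ) :
    trackStrand (w₁ ++ w₂) a = trackStrand w₂ (trackStrand w₁ a) :=
  List.foldl_append

lemma trackStrand_singleton (t a : ℕ) : trackStrand [t] a = Equiv.swap t (t + 1) a := rfl

lemma trackStrand_of_forall_lt {w : List ℕ} {a : ℕ} (h : ∀ t ∈ w, t + 1 < a) :
    trackStrand w a = a := by
  induction w with
  | nil => rfl
  | cons t w ih =>
    have ht := h t List.mem_cons_self
    rw [trackStrand_cons, Equiv.swap_apply_of_ne_of_ne (by omega) (by omega)]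
    exact ih fun s hs => h s (List.mem_cons_of_mem t hs)

lemma trackStrand_range_zero (m : ℕ) : trackStrand (List.range m) 0 = m := by
  induction m with
  | zero => rfl
  | succ m ih => rw [List.range_succ, trackStrand_append, ih, trackStrand_singleton,
      Equiv.swap_apply_left]

lemma trackStrand_range_of_pos {m a : ℕ} (ha : 0 < a) (ham : a ≤ m) :
    trackStrand (List.range m) a = a - 1 := by
  induction m with
  | zero => omega
  | succ m ih =>
    rw [List.range_succ, trackStrand_append, trackStrand_singleton]
    rcases Nat.lt_or_ge m a with hma | ham'
    · rw [trackStrand_of_forall_lt fun t ht => by simp at ht; omega, show a = m + 1 by omega,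
        Equiv.swap_apply_right]
      rfl
    · rw [ih ham', Equiv.swap_apply_of_ne_of_ne (by omega) (by omega)]

def deltaWord (n : ℕ) : List ℕ :=
  ((List.range (n - 1)).reverse.map fun t => List.range (t + 1)).flatten

lemma deltaWord_succ_succ (n : ℕ) :
    deltaWord (n + 2) = List.range (n + 1) ++ deltaWord (n + 1) := by
  simp [deltaWord, List.range_succ]

lemma lt_of_mem_deltaWord {n t : ℕ} (h : t ∈ deltaWord n) : t + 1 < n := by
  simp only [deltaWord, List.mem_flatten, List.mem_map, List.mem_reverse, List.mem_range] at h
  obtain ⟨_, ⟨s, hs, rfl⟩, ht⟩ := h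
  rw [List.mem_range] at ht
  omega

lemma trackStrand_deltaWord : ∀ {n a : ℕ}, a < n → trackStrand (deltaWord n) a = n - 1 - a
  | 1, 0, _ => rfl
  | n + 2, a, ha => by
    rw [deltaWord_succ_succ, trackStrand_append]
    rcases Nat.eq_zero_or_pos a with rfl | hpos
    · rw [trackStrand_range_zero, trackStrand_of_forall_lt fun t ht => lt_of_mem_deltaWord ht]
      rfl
    · rw [trackStrand_range_of_pos hpos (by omega), trackStrand_deltaWord (by omega)]
      omega

/-- The idempotent `ε_{a+1}` with unguarded 0-based index `a`; equal to `1` when out of range. -/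
def ibEN (n a : ℕ) : IB n := if h : a < n then ibE n ⟨a, h⟩ else 1

section Relations

variable {n : ℕ}

lemma ibEN_of_lt {a : ℕ} (h : a < n) : ibEN n a = ibE n ⟨a, h⟩ := dif_pos h

lemma ibEN_of_le {a : ℕ} (h : n ≤ a) : ibEN n a = 1 := dif_neg (by omega)

lemma ibSN_of_lt {t : ℕ} (h : t < n - 1) : ibSN n t = ibS n ⟨t, h⟩ := dif_pos h

lemma ibSN_of_le {t : ℕ} (h : n - 1 ≤ t) : ibSN n t = 1 := dif_neg (by omega)

lemma ibCon_mk'_eq_of_ibRel {x y : FreeMonoid (IBGen n)} (h : ibRel n x y) :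
    (ibCon n).mk' x = (ibCon n).mk' y :=
  (Con.eq (ibCon n)).2 (ConGen.Rel.of _ _ h)

lemma isUnit_ibSN (t : ℕ) : IsUnit (ibSN n t) := by
  by_cases h : t < n - 1
  · rw [ibSN_of_lt h]
    refine ⟨⟨ibS n ⟨t, h⟩, ibSi n ⟨t, h⟩, ?_, ?_⟩, rfl⟩
    · have h := ibCon_mk'_eq_of_ibRel (ibRel.inv_right (n := n) ⟨t, h⟩)
      simp only [map_mul, map_one] at h
      exact h
    · have h := ibCon_mk'_eq_of_ibRel (ibRel.inv_left (n := n) ⟨t, h⟩)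
      simp only [map_mul, map_one] at h
      exact h
  · rw [ibSN_of_le (by omega)]
    exact isUnit_one

lemma ibSN_braid {t : ℕ} (h : t + 2 < n) :
    ibSN n t * ibSN n (t + 1) * ibSN n t = ibSN n (t + 1) * ibSN n t * ibSN n (t + 1) := by
  rw [ibSN_of_lt (by omega), ibSN_of_lt (by omega)]
  have h := ibCon_mk'_eq_of_ibRel (ibRel.braid (n := n) ⟨t, by omega⟩ ⟨t + 1, by omega⟩ rfl)
  simp only [map_mul] at h
  exact h

lemma ibEN_mul_ibSN_self {t : ℕ} (h : t + 1 < n) :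
    ibEN n t * ibSN n t = ibSN n t * ibEN n (t + 1) := by
  rw [ibEN_of_lt (by omega), ibEN_of_lt h, ibSN_of_lt (by omega)]
  have h := ibCon_mk'_eq_of_ibRel
    (ibRel.e_s (n := n) ⟨t, by omega⟩ ⟨t, by omega⟩ ⟨t + 1, h⟩ rfl rfl)
  simp only [map_mul] at h
  exact h

lemma ibEN_succ_mul_ibSN {t : ℕ} (h : t + 1 < n) :
    ibEN n (t + 1) * ibSN n t = ibSN n t * ibEN n t := by
  rw [ibEN_of_lt h, ibEN_of_lt (by omega), ibSN_of_lt (by omega)]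
  have h := ibCon_mk'_eq_of_ibRel
    (ibRel.e_s' (n := n) ⟨t, by omega⟩ ⟨t, by omega⟩ ⟨t + 1, h⟩ rfl rfl)
  simp only [map_mul] at h
  exact h

lemma commute_ibEN_ibSN_of_far {a t : ℕ} (h : t + 2 ≤ a ∨ a + 2 ≤ t) :
    Commute (ibEN n a) (ibSN n t) := by
  by_cases ha : a < n
  · by_cases ht : t < n - 1
    · rw [ibEN_of_lt ha, ibSN_of_lt ht]
      have h := ibCon_mk'_eq_of_ibRel (ibRel.e_comm ⟨a, ha⟩ ⟨t, ht⟩ h)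
      simp only [map_mul] at h
      exact h
    · rw [ibSN_of_le (by omega)]
      exact Commute.one_right _
  · rw [ibEN_of_le (by omega)]
    exact Commute.one_left _

lemma commute_ibEN_ibSN_succ (a : ℕ) : Commute (ibEN n a) (ibSN n (a + 1)) := by
  by_cases h : a + 2 < n
  · set S := ibSN n a
    set T := ibSN n (a + 1)
    have hST : ibEN n a * (S * T) = S * T * ibEN n (a + 2) := by
      rw [← mul_assoc, ibEN_mul_ibSN_self (by omega), mul_assoc, ibEN_mul_ibSN_self h, mul_assoc]
    have hS : Commute (ibEN n (a + 2)) S := commute_ibEN_ibSN_of_far (Or.inl le_rfl)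
    have hbraid : S * T * S = T * S * T := ibSN_braid h
    refine ((isUnit_ibSN a).mul (isUnit_ibSN (a + 1))).mul_left_inj.mp ?_
    calc ibEN n a * T * (S * T) = ibEN n a * (S * T) * S := by
          rw [mul_assoc, mul_assoc, ← mul_assoc T, ← hbraid, mul_assoc S]
      _ = S * T * S * ibEN n (a + 2) := by rw [hST, mul_assoc, hS.eq, ← mul_assoc]
      _ = T * (S * T) * ibEN n (a + 2) := by rw [hbraid, mul_assoc T]
      _ = T * ibEN n a * (S * T) := by rw [mul_assoc, ← hST, mul_assoc]
  · rw [ibSN_of_le (by omega)]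
    exact Commute.one_right _

lemma ibEN_mul_ibSN {t : ℕ} (ht : t + 1 < n) (a : ℕ) :
    ibEN n a * ibSN n t = ibSN n t * ibEN n (Equiv.swap t (t + 1) a) := by
  rcases eq_or_ne a t with rfl | h₀
  · rw [Equiv.swap_apply_left, ibEN_mul_ibSN_self ht]
  rcases eq_or_ne a (t + 1) with rfl | h₁
  · rw [Equiv.swap_apply_right, ibEN_succ_mul_ibSN ht]
  rw [Equiv.swap_apply_of_ne_of_ne h₀ h₁]
  rcases eq_or_ne (a + 1) t with rfl | h₂
  · exact commute_ibEN_ibSN_succ a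
  · exact commute_ibEN_ibSN_of_far (by omega)

lemma ibEN_mul_prod_ibSN (w : List ℕ) (hw : ∀ t ∈ w, t + 1 < n) (a : ℕ) :
    ibEN n a * (w.map (ibSN n)).prod = (w.map (ibSN n)).prod * ibEN n (trackStrand w a) := by
  induction w generalizing a with
  | nil => simp
  | cons t w ih =>
    rw [List.map_cons, List.prod_cons, ← mul_assoc, ibEN_mul_ibSN (hw t List.mem_cons_self),
      mul_assoc, ih (fun s hs => hw s (List.mem_cons_of_mem t hs)), trackStrand_cons, mul_assoc]

end Relations

lemma ibDelta_eq_prod_deltaWord (n : ℕ) : ibDelta n = ((deltaWord n).map (ibSN n)).prod := by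
  rw [ibDelta, deltaWord, List.map_flatten, List.prod_flatten, List.map_map, List.map_map]
  rfl

/-- In the inverse braid monoid `IB_n`, the idempotent
generators commute with the Garside element via `ε_i Δ = Δ ε_{n+1-i}`
(1-based; here `i.rev` is the 0-based version of `n+1-i`). -/
theorem ibE_mul_delta (n : ℕ) (i : Fin n) :
    ibE n i * ibDelta n = ibDelta n * ibE n i.rev := by
  have hrev : ibE n i.rev = ibEN n (n - 1 - i) := by
    rw [ibEN_of_lt (by omega)]
    congr 1
    ext
    simp only [Fin.val_rev]
    omega
  rw [hrev, ← ibEN_of_lt i.isLt, ibDelta_eq_prod_deltaWord, ← trackStrand_deltaWord i.isLt]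
  exact ibEN_mul_prod_ibSN _ (fun t ht => lt_of_mem_deltaWord ht) i
end

section
/- The pairing μ : IB_k × IB_l → IB_{k+l}, defined by placing partial braids side by side (μ(σ'_i, e) = σ_i, μ(e, σ''_j) = σ_{j+k}, μ(ε'_i, e) = ε_i, μ(e, ε''_j) = ε_{j+k}), is a well-defined monoid homomorphism making the diagram with the standard pairing Br_k × Br_l → Br_{k+l} and the canonical inclusions Br_m → IB_m commute. -/
/-!
Shifting all indices of the generators by `d` maps every defining relation of `IB_m` to a
defining relation of `IB_n` when `d + m ≤ n`, so it induces a monoid homomorphism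
`IB_m → IB_n`. The pairing is `(x, y) ↦ shift₀ x * shift_k y`; it is multiplicative because
the two images commute, and for that it suffices that generators living on disjoint blocks of
strands commute. For two `σ`'s, and for `ε_a` against `σ_i` with `|a - i| ≥ 2`, this is a
defining relation; the remaining cases, `ε_a` against `σ_{a+1}` and `ε_a` against `ε_b`, follow
by conjugating with `σ`'s, using `σ_i ε_{i+1} σ_i⁻¹ = ε_i` (and its mirror), the braid
relation, and `ε_i ε_{i+1} σ_i = ε_i ε_{i+1} = σ_i ε_i ε_{i+1}`. The square with the braid
pairing commutes because both paths agree on the Artin generators.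
-/

theorem FreeMonoid.commute_of_commute_of {α β M : Type*} [Monoid M]
    {f : FreeMonoid α →* M} {g : FreeMonoid β →* M}
    (h : ∀ a b, Commute (f (of a)) (g (of b))) (x : FreeMonoid α) (y : FreeMonoid β) :
    Commute (f x) (g y) := by
  have commute_of_left : ∀ a, Commute (f (of a)) (g y) := by
    intro a
    induction y using FreeMonoid.inductionOn' with
    | one => simpa only [map_one] using Commute.one_right _
    | of_mul b y ih => simpa only [map_mul] using (h a b).mul_right ih
  induction x using FreeMonoid.inductionOn' with
  | one => simpa only [map_one] using Commute.one_left _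
  | of_mul a x ih => simpa only [map_mul] using (commute_of_left a).mul_left ih

theorem BraidGroup.monoidHom_ext {n : ℕ} {M : Type*} [Monoid M] {f g : BraidGroup n →* M}
    (h : ∀ i, f (braidGen n i) = g (braidGen n i)) : f = g := by
  have hunits : f.toHomUnits = g.toHomUnits := PresentedGroup.ext fun i => Units.ext (h i)
  ext x
  simpa using congr_arg (fun φ : BraidGroup n →* Mˣ => (φ x : M)) hunits

namespace IB

variable {n : ℕ}

theorem mk'_eq_of_ibRel {x y : FreeMonoid (IBGen n)} (h : ibRel n x y) :
    (ibCon n).mk' x = (ibCon n).mk' y :=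
  (Con.eq _).mpr (ConGen.Rel.of _ _ h)

theorem ibS_commute_ibS {i j : Fin (n - 1)} (h : (i : ℕ) + 1 < j) :
    Commute (ibS n i) (ibS n j) :=
  mk'_eq_of_ibRel (.braid_comm i j h)

theorem ibS_mul_ibS_mul_ibS {i j : Fin (n - 1)} (h : (i : ℕ) + 1 = j) :
    ibS n i * ibS n j * ibS n i = ibS n j * ibS n i * ibS n j :=
  mk'_eq_of_ibRel (.braid i j h)

def ibSUnit (i : Fin (n - 1)) : (IB n)ˣ where
  val := ibS n i
  inv := ibSi n i
  val_inv := mk'_eq_of_ibRel (.inv_right i)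
  inv_val := mk'_eq_of_ibRel (.inv_left i)

theorem ibE_commute_ibS_of_far {a : Fin n} {i : Fin (n - 1)}
    (h : (i : ℕ) + 2 ≤ a ∨ (a : ℕ) + 2 ≤ i) : Commute (ibE n a) (ibS n i) :=
  mk'_eq_of_ibRel (.e_comm a i h)

theorem ibS_semiconjBy_ibE_succ_ibE {i : Fin (n - 1)} {a b : Fin n} (ha : (a : ℕ) = i)
    (hb : (b : ℕ) = i + 1) : SemiconjBy (ibS n i) (ibE n b) (ibE n a) :=
  (mk'_eq_of_ibRel (.e_s i a b ha hb)).symm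

theorem ibS_semiconjBy_ibE_ibE_succ {i : Fin (n - 1)} {a b : Fin n} (ha : (a : ℕ) = i)
    (hb : (b : ℕ) = i + 1) : SemiconjBy (ibS n i) (ibE n a) (ibE n b) :=
  (mk'_eq_of_ibRel (.e_s' i a b ha hb)).symm

theorem ibE_mul_ibE_mul_ibS {i : Fin (n - 1)} {a b : Fin n} (ha : (a : ℕ) = i)
    (hb : (b : ℕ) = i + 1) : ibE n a * ibE n b * ibS n i = ibE n a * ibE n b :=
  mk'_eq_of_ibRel (.ee_s i a b ha hb)

theorem ibS_mul_ibE_mul_ibE {i : Fin (n - 1)} {a b : Fin n} (ha : (a : ℕ) = i)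
    (hb : (b : ℕ) = i + 1) : ibS n i * ibE n a * ibE n b = ibE n a * ibE n b :=
  mk'_eq_of_ibRel (.s_ee i a b ha hb)

theorem ibE_commute_ibS_succ {a : Fin n} {i : Fin (n - 1)} (h : (a : ℕ) + 1 = i) :
    Commute (ibE n a) (ibS n i) := by
  have hi := i.isLt
  let P := ibSUnit (n := n) ⟨a, by omega⟩
  let Q := ibSUnit i
  let a₁ : Fin n := ⟨a + 1, by omega⟩
  let a₂ : Fin n := ⟨a + 2, by omega⟩
  have hP : SemiconjBy (P : IB n) (ibE n a) (ibE n a₁) := ibS_semiconjBy_ibE_ibE_succ rfl rfl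
  have hQ : SemiconjBy (Q : IB n) (ibE n a₁) (ibE n a₂) :=
    ibS_semiconjBy_ibE_ibE_succ (by simp [a₁]; omega) (by simp [a₂]; omega)
  have hP₂ : SemiconjBy (P : IB n) (ibE n a₂) (ibE n a₂) :=
    (ibE_commute_ibS_of_far (Or.inl (by simp [a₂]))).symm
  have hbraid : P⁻¹ * Q⁻¹ * P * Q * P = Q := by
    have : P * Q * P = Q * P * Q := Units.ext (ibS_mul_ibS_mul_ibS h)
    rw [show P⁻¹ * Q⁻¹ * P * Q * P = P⁻¹ * Q⁻¹ * (P * Q * P) by group, this]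
    group
  -- conjugating by `P, Q, P, Q⁻¹, P⁻¹` in turn: `ε_a ↦ ε_{a+1} ↦ ε_{a+2} ↦ ε_{a+2} ↦ ε_{a+1} ↦ ε_a`
  have key : SemiconjBy ((P⁻¹ * Q⁻¹ * P * Q * P : (IB n)ˣ) : IB n) (ibE n a) (ibE n a) := by
    push_cast
    exact (((hP.units_inv_symm_left.mul_left hQ.units_inv_symm_left).mul_left hP₂).mul_left
      hQ).mul_left hP
  rw [hbraid] at key
  exact key.symm

theorem ibE_commute_ibS {a : Fin n} {i : Fin (n - 1)} (h₁ : (a : ℕ) ≠ i)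
    (h₂ : (a : ℕ) ≠ i + 1) : Commute (ibE n a) (ibS n i) := by
  by_cases h : (a : ℕ) + 1 = i
  · exact ibE_commute_ibS_succ h
  · exact ibE_commute_ibS_of_far (by omega)

theorem ibE_commute_ibE_succ {a b : Fin n} (h : (a : ℕ) + 1 = b) :
    Commute (ibE n a) (ibE n b) := by
  let P := ibSUnit (n := n) ⟨a, by have := b.isLt; omega⟩
  have hPa : SemiconjBy (P : IB n) (ibE n a) (ibE n b) := ibS_semiconjBy_ibE_ibE_succ rfl h.symm
  have hPb : ibE n b = ↑P⁻¹ * (ibE n a * P) :=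
    (Units.eq_inv_mul_iff_mul_eq _).mpr (ibS_semiconjBy_ibE_succ_ibE rfl h.symm)
  have hright : ibE n a * ibE n b * P = ibE n a * ibE n b := ibE_mul_ibE_mul_ibS rfl h.symm
  have hleft : P * (ibE n a * ibE n b) = ibE n a * ibE n b := by
    rw [← mul_assoc]; exact ibS_mul_ibE_mul_ibE rfl h.symm
  symm
  calc ibE n b * ibE n a = ↑P⁻¹ * (ibE n a * (P * ibE n a)) := by rw [hPb]; simp only [mul_assoc]
    _ = ↑P⁻¹ * (ibE n a * ibE n b * P) := by rw [hPa.eq]; simp only [mul_assoc]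
    _ = ↑P⁻¹ * (P * (ibE n a * ibE n b)) := by rw [hright, hleft]
    _ = ibE n a * ibE n b := Units.inv_mul_cancel_left P _

theorem ibE_commute_ibE_of_lt {a b : Fin n} (h : (a : ℕ) < b) : Commute (ibE n a) (ibE n b) := by
  obtain ⟨b, hb⟩ := b
  change (a : ℕ) < b at h
  revert hb
  induction b, h using Nat.le_induction with
  | base => exact fun _ => ibE_commute_ibE_succ rfl
  | succ b hab ih =>
    intro hb
    let R := ibSUnit (n := n) ⟨b, by omega⟩
    have hR : Commute (ibE n a) R := ibE_commute_ibS (by simp; omega) (by simp; omega)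
    -- `ε_{b+1}` is conjugate to `ε_b` by `σ_b`, which commutes with `ε_a`
    have hconj : ibE n ⟨b + 1, hb⟩ = ↑R⁻¹ * (ibE n ⟨b, by omega⟩ * R) :=
      (Units.eq_inv_mul_iff_mul_eq _).mpr (ibS_semiconjBy_ibE_succ_ibE rfl rfl)
    rw [hconj]
    exact hR.units_inv_right.mul_right ((ih (by omega)).mul_right hR)

end IB

namespace IBGen

variable {m n : ℕ}

def toIB (g : IBGen n) : IB n := (ibCon n).mk' (.of g)

def minStrand : IBGen n → ℕ
  | s i | si i => i
  | e a => a

def maxStrand : IBGen n → ℕ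
  | s i | si i => i + 1
  | e a => a

theorem maxStrand_lt (g : IBGen n) : g.maxStrand < n := by
  cases g <;> simp only [maxStrand] <;> omega

theorem commute_toIB_of_maxStrand_lt {g h : IBGen n} (hgh : g.maxStrand < h.minStrand) :
    Commute g.toIB h.toIB := by
  rcases g with i | i | a <;> rcases h with j | j | b <;> simp only [maxStrand, minStrand] at hgh
  · exact IB.ibS_commute_ibS hgh
  · exact (IB.ibS_commute_ibS hgh).units_inv_right (u := IB.ibSUnit j)
  · exact (IB.ibE_commute_ibS (by omega) (by omega)).symm
  · exact (IB.ibS_commute_ibS hgh).units_inv_left (u := IB.ibSUnit i)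
  · exact ((IB.ibS_commute_ibS hgh).units_inv_left (u := IB.ibSUnit i)).units_inv_right
      (u := IB.ibSUnit j)
  · exact (IB.ibE_commute_ibS (by omega) (by omega)).symm.units_inv_left (u := IB.ibSUnit i)
  · exact IB.ibE_commute_ibS (by omega) (by omega)
  · exact (IB.ibE_commute_ibS (by omega) (by omega)).units_inv_right (u := IB.ibSUnit j)
  · exact IB.ibE_commute_ibE_of_lt hgh

def shift (d : ℕ) (hd : d + m ≤ n) : IBGen m → IBGen n
  | s i => s ⟨d + i, by omega⟩
  | si i => si ⟨d + i, by omega⟩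
  | e a => e ⟨d + a, by omega⟩

theorem minStrand_shift (d : ℕ) (hd : d + m ≤ n) (g : IBGen m) :
    (g.shift d hd).minStrand = d + g.minStrand := by
  cases g <;> rfl

theorem maxStrand_shift (d : ℕ) (hd : d + m ≤ n) (g : IBGen m) :
    (g.shift d hd).maxStrand = d + g.maxStrand := by
  cases g <;> rfl

end IBGen

theorem ibRel.map_shift {m n d : ℕ} (hd : d + m ≤ n) {x y : FreeMonoid (IBGen m)}
    (h : ibRel m x y) :
    ibRel n (FreeMonoid.map (IBGen.shift d hd) x) (FreeMonoid.map (IBGen.shift d hd) y) := by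
  cases h with
  | braid_comm i j h => exact .braid_comm _ _ (by simp; omega)
  | braid i j h => exact .braid _ _ (by simp; omega)
  | inv_right i => exact .inv_right _
  | inv_left i => exact .inv_left _
  | e_comm a i h => exact .e_comm _ _ (by simp; omega)
  | e_s i a b ha hb => exact .e_s _ _ _ (by simp; omega) (by simp; omega)
  | e_s' i a b ha hb => exact .e_s' _ _ _ (by simp; omega) (by simp; omega)
  | idem a => exact .idem _
  | e_ss i b hb => exact .e_ss _ _ (by simp; omega)
  | ss_e i b hb => exact .ss_e _ _ (by simp; omega)
  | ee_s i a b ha hb => exact .ee_s _ _ _ (by simp; omega) (by simp; omega)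
  | s_ee i a b ha hb => exact .s_ee _ _ _ (by simp; omega) (by simp; omega)

namespace IB

variable {m n : ℕ}

def shift (d : ℕ) (hd : d + m ≤ n) : IB m →* IB n :=
  Con.lift _ ((ibCon n).mk'.comp (FreeMonoid.map (IBGen.shift d hd)))
    (Con.conGen_le.mpr fun _ _ h => (Con.ker_rel _).mpr (mk'_eq_of_ibRel (h.map_shift hd)))

theorem shift_toIB (d : ℕ) (hd : d + m ≤ n) (g : IBGen m) :
    shift d hd g.toIB = (g.shift d hd).toIB :=
  Con.lift_mk' _ _

theorem shift_ibS {d : ℕ} (hd : d + m ≤ n) (i : Fin (m - 1)) {j : Fin (n - 1)}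
    (hj : (j : ℕ) = d + i) : shift d hd (ibS m i) = ibS n j :=
  (shift_toIB d hd (.s i)).trans (congrArg (ibS n) (Fin.ext hj.symm))

theorem shift_ibE {d : ℕ} (hd : d + m ≤ n) (a : Fin m) {b : Fin n}
    (hb : (b : ℕ) = d + a) : shift d hd (ibE m a) = ibE n b :=
  (shift_toIB d hd (.e a)).trans (congrArg (ibE n) (Fin.ext hb.symm))

theorem commute_shift_shift {m₁ m₂ d₁ d₂ : ℕ} (h₁ : d₁ + m₁ ≤ n) (h₂ : d₂ + m₂ ≤ n)
    (h : d₁ + m₁ ≤ d₂) (x : IB m₁) (y : IB m₂) :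
    Commute (shift d₁ h₁ x) (shift d₂ h₂ y) := by
  induction x using Con.induction_on with | H w => ?_
  induction y using Con.induction_on with | H v => ?_
  refine FreeMonoid.commute_of_commute_of (f := (shift d₁ h₁).comp (ibCon m₁).mk')
    (g := (shift d₂ h₂).comp (ibCon m₂).mk') (fun g g' => ?_) w v
  change Commute (shift d₁ h₁ g.toIB) (shift d₂ h₂ g'.toIB)
  rw [shift_toIB, shift_toIB]
  refine IBGen.commute_toIB_of_maxStrand_lt ?_
  rw [IBGen.maxStrand_shift, IBGen.minStrand_shift]
  have := g.maxStrand_lt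
  omega

end IB

/-- The side-by-side pairing `μ : IB_k × IB_l → IB_{k+l}`
(`μ(σ'_i, e) = σ_i`, `μ(e, σ''_j) = σ_{j+k}`, `μ(ε'_i, e) = ε_i`,
`μ(e, ε''_j) = ε_{j+k}`) is a well-defined monoid homomorphism, and the
square formed with the standard pairing `Br_k × Br_l → Br_{k+l}` and the
canonical inclusions `κ : Br_m → IB_m` commutes. -/
theorem ib_pairing (k l : ℕ)
    (μBr : BraidGroup k × BraidGroup l →* BraidGroup (k + l))
    (hμBr₁ : ∀ i : Fin (k - 1),
      μBr (braidGen k i, 1) = braidGen (k + l) ⟨(i : ℕ), by have := i.isLt; omega⟩)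
    (hμBr₂ : ∀ j : Fin (l - 1),
      μBr (1, braidGen l j) = braidGen (k + l) ⟨k + (j : ℕ), by have := j.isLt; omega⟩)
    (κk : BraidGroup k →* IB k) (hκk : ∀ i, κk (braidGen k i) = ibS k i)
    (κl : BraidGroup l →* IB l) (hκl : ∀ j, κl (braidGen l j) = ibS l j)
    (κkl : BraidGroup (k + l) →* IB (k + l))
    (hκkl : ∀ i, κkl (braidGen (k + l) i) = ibS (k + l) i) :
    ∃ μ : IB k × IB l →* IB (k + l),
      (∀ i : Fin (k - 1),
        μ (ibS k i, 1) = ibS (k + l) ⟨(i : ℕ), by have := i.isLt; omega⟩) ∧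
      (∀ j : Fin (l - 1),
        μ (1, ibS l j) = ibS (k + l) ⟨k + (j : ℕ), by have := j.isLt; omega⟩) ∧
      (∀ a : Fin k,
        μ (ibE k a, 1) = ibE (k + l) ⟨(a : ℕ), by have := a.isLt; omega⟩) ∧
      (∀ b : Fin l,
        μ (1, ibE l b) = ibE (k + l) ⟨k + (b : ℕ), by have := b.isLt; omega⟩) ∧
      ∀ (a : BraidGroup k) (b : BraidGroup l),
        μ (κk a, κl b) = κkl (μBr (a, b)) := by
  have hL : 0 + k ≤ k + l := by omega
  have hR : k + l ≤ k + l := le_rfl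
  let μ := (IB.shift 0 hL).noncommCoprod (IB.shift k hR) (IB.commute_shift_shift hL hR (by omega))
  have hμ : ∀ x y, μ (x, y) = IB.shift 0 hL x * IB.shift k hR y := fun _ _ => rfl
  have hBrL : (IB.shift 0 hL).comp κk = κkl.comp (μBr.comp (.inl _ _)) :=
    BraidGroup.monoidHom_ext fun i => by
      simp only [MonoidHom.comp_apply, MonoidHom.inl_apply, hκk, hμBr₁, hκkl]
      exact IB.shift_ibS hL i (by simp)
  have hBrR : (IB.shift k hR).comp κl = κkl.comp (μBr.comp (.inr _ _)) :=
    BraidGroup.monoidHom_ext fun j => by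
      simp only [MonoidHom.comp_apply, MonoidHom.inr_apply, hκl, hμBr₂, hκkl]
      exact IB.shift_ibS hR j (by rfl)
  refine ⟨μ, fun i => ?_, fun j => ?_, fun a => ?_, fun b => ?_, fun a b => ?_⟩
  · rw [hμ, map_one, mul_one]; exact IB.shift_ibS hL i (by simp)
  · rw [hμ, map_one, one_mul]; exact IB.shift_ibS hR j (by rfl)
  · rw [hμ, map_one, mul_one]; exact IB.shift_ibE hL a (by simp)
  · rw [hμ, map_one, one_mul]; exact IB.shift_ibE hR b (by rfl)
  · rw [hμ, ← MonoidHom.comp_apply, hBrL, ← MonoidHom.comp_apply (IB.shift k hR), hBrR]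
    simp only [MonoidHom.comp_apply, MonoidHom.inl_apply, MonoidHom.inr_apply, ← map_mul,
      Prod.mk_mul_mk, mul_one, one_mul]
end
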